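/- arXiv:2406.13670 — 3 statements merged into one kernel-verified Lean document; each statement's English description precedes it below -/
import Mathlib

section
/- Let Δ be a simplicial forest on vertex set V with facets F₁, …, F_r, and set f_i = ∏_{v ∈ F_i} x_v ∈ S. For any 1 ≤ k ≤ ν(Δ), every minimal monomial generator u of I(Δ)^{[k]} can be expressed uniquely as u = f_{i₁} ⋯ f_{i_k} where {F_{i₁}, …, F_{i_k}} is a k-matching of Δ; equivalently, if two k-matchings of Δ yield the same product of facet monomials, then they are equal. -/
noncomputable section

open Finset MvPolynomial

/-- A simplicial complex on the vertex type `V`: a finite, nonempty collection of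
finite subsets of `V` that is closed under taking subsets. -/
structure SimplicialComplex (V : Type) [DecidableEq V] : Type where
  faces : Finset (Finset V)
  nonempty' : faces.Nonempty
  down_closed : ∀ ⦃F G : Finset V⦄, F ∈ faces → G ⊆ F → G ∈ faces

namespace SimplicialComplex

variable {V : Type} [DecidableEq V]

open scoped Classical in
/-- The facets: the maximal faces with respect to inclusion. -/
def facets (Δ : SimplicialComplex V) : Finset (Finset V) :=
  Δ.faces.filter fun F => ∀ G ∈ Δ.faces, F ⊆ G → F = G

/-- A matching: a set of pairwise disjoint facets. -/
def IsMatching (Δ : SimplicialComplex V) (M : Finset (Finset V)) : Prop :=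
  M ⊆ Δ.facets ∧ ∀ F ∈ M, ∀ G ∈ M, F ≠ G → F ∩ G = ∅

/-- The matching number `ν(Δ)`: the maximum cardinality of a matching. -/
def matchingNumber (Δ : SimplicialComplex V) : ℕ :=
  sSup {r : ℕ | ∃ M : Finset (Finset V), Δ.IsMatching M ∧ M.card = r}

/-- `F` is a leaf of the subcomplex generated by the facet set `S`: either `F` is
the only facet, or there is another facet `G` with `H ∩ F ⊆ G ∩ F` for all
facets `H ≠ F`. -/
def IsLeafIn (S : Finset (Finset V)) (F : Finset V) : Prop :=
  F ∈ S ∧ (S = {F} ∨ ∃ G ∈ S, G ≠ F ∧ ∀ H ∈ S, H ≠ F → H ∩ F ⊆ G ∩ F)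

/-- A simplicial forest: every nonempty subcomplex has a leaf (equivalently,
every connected component is a simplicial tree). -/
def IsForest (Δ : SimplicialComplex V) : Prop :=
  ∀ S ⊆ Δ.facets, S.Nonempty → ∃ F, IsLeafIn S F

/-- Connectedness: any two facets are joined by a chain of facets in which
consecutive facets intersect nontrivially. -/
def Connected (Δ : SimplicialComplex V) : Prop :=
  ∀ F ∈ Δ.facets, ∀ G ∈ Δ.facets,
    Relation.ReflTransGen
      (fun A B => A ∈ Δ.facets ∧ B ∈ Δ.facets ∧ (A ∩ B).Nonempty) F G

/-- A simplicial tree: a connected simplicial forest. -/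
def IsTree (Δ : SimplicialComplex V) : Prop := Δ.Connected ∧ Δ.IsForest

/-- A good leaf: a facet which is a leaf of every subcomplex containing it. -/
def IsGoodLeaf (Δ : SimplicialComplex V) (F : Finset V) : Prop :=
  F ∈ Δ.facets ∧ ∀ S ⊆ Δ.facets, F ∈ S → IsLeafIn S F

/-- Two disjoint facets `F`, `G` form a gap: the induced subcomplex on `F ∪ G`
has facet set exactly `{F, G}`. -/
def FormGap (Δ : SimplicialComplex V) (F G : Finset V) : Prop :=
  F ∈ Δ.facets ∧ G ∈ Δ.facets ∧ F ∩ G = ∅ ∧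
    ∀ H ∈ Δ.facets, H ⊆ F ∪ G → H = F ∨ H = G

/-- A restricted matching: a matching one of whose facets forms a gap with every
other facet of the matching. -/
def IsRestrictedMatching (Δ : SimplicialComplex V) (M : Finset (Finset V)) : Prop :=
  Δ.IsMatching M ∧ ∃ F ∈ M, ∀ G ∈ M, G ≠ F → Δ.FormGap F G

/-- The restricted matching number `ν₀(Δ)`. -/
def restrictedMatchingNumber (Δ : SimplicialComplex V) : ℕ :=
  sSup {r : ℕ | ∃ M : Finset (Finset V), Δ.IsRestrictedMatching M ∧ M.card = r}

/-- An induced matching: a matching `M` such that the facets contained in the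
union of the members of `M` are exactly the members of `M`. -/
def IsInducedMatching (Δ : SimplicialComplex V) (M : Finset (Finset V)) : Prop :=
  Δ.IsMatching M ∧ ∀ H ∈ Δ.facets, H ⊆ M.biUnion id → H ∈ M

/-- The induced matching number `ν₁(Δ)`. -/
def inducedMatchingNumber (Δ : SimplicialComplex V) : ℕ :=
  sSup {r : ℕ | ∃ M : Finset (Finset V), Δ.IsInducedMatching M ∧ M.card = r}

/-- A proper chain of length `n` between the facets `F` and `G`. -/
def ProperChain (Δ : SimplicialComplex V) (F G : Finset V) (n : ℕ) : Prop :=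
  ∃ c : ℕ → Finset V, c 0 = F ∧ c n = G ∧ (∀ i ≤ n, c i ∈ Δ.facets) ∧
    ∀ i < n, (c i ∩ c (i + 1)).card = (c (i + 1)).card - 1

/-- The distance between two facets: the minimal length of a proper chain. -/
def dist (Δ : SimplicialComplex V) (F G : Finset V) : ℕ :=
  sInf {n : ℕ | Δ.ProperChain F G n}

/-- The intersection property for a pure complex whose facets have cardinality
`t` (`= d + 1`): it is connected in codimension 1, and any two facets `F`, `G`
with `|F ∩ G| = t - k` (`1 ≤ k ≤ t`) satisfy `dist(F, G) = k`. -/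
def HasIntersectionProperty (Δ : SimplicialComplex V) (t : ℕ) : Prop :=
  (∀ F ∈ Δ.facets, F.card = t) ∧
    (∀ F ∈ Δ.facets, ∀ G ∈ Δ.facets, ∃ n, Δ.ProperChain F G n) ∧
    ∀ F ∈ Δ.facets, ∀ G ∈ Δ.facets, ∀ k, 1 ≤ k → k ≤ t →
      (F ∩ G).card = t - k → Δ.dist F G = k

end SimplicialComplex

/-- The simplicial complex generated by a finite family of faces. -/
def ofFacets {V : Type} [DecidableEq V] (ℱ : Finset (Finset V)) :
    SimplicialComplex V where
  faces := insert ∅ (ℱ.biUnion Finset.powerset)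
  nonempty' := ⟨∅, Finset.mem_insert_self _ _⟩
  down_closed := by
    intro F G hF hGF
    rcases Finset.mem_insert.mp hF with h | h
    · subst h
      exact Finset.mem_insert.mpr <| Or.inl (Finset.subset_empty.mp hGF)
    · rcases Finset.mem_biUnion.mp h with ⟨A, hA, hFA⟩
      exact Finset.mem_insert.mpr <| Or.inr <| Finset.mem_biUnion.mpr
        ⟨A, hA, Finset.mem_powerset.mpr (hGF.trans (Finset.mem_powerset.mp hFA))⟩

/-- The ideal of `K[x_v : v ∈ V]` generated by the products
`x_{F₁} ⋯ x_{F_k}` over all `k`-matchings `{F₁, …, F_k}` taken from the facet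
set `ℱ`.  For `ℱ = ℱ(Δ)` this is the `k`-th squarefree power `I(Δ)^{[k]}` of the
facet ideal `I(Δ)` (and the facet ideal itself for `k = 1`). -/
def matchPow (K : Type) [Field K] {V : Type} [DecidableEq V]
    (ℱ : Finset (Finset V)) (k : ℕ) : Ideal (MvPolynomial V K) :=
  Ideal.span {p | ∃ M : Finset (Finset V), M ⊆ ℱ ∧
    (∀ F ∈ M, ∀ G ∈ M, F ≠ G → F ∩ G = ∅) ∧ M.card = k ∧
    p = ∏ F ∈ M, ∏ v ∈ F, (X v : MvPolynomial V K)}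

/-- The `k`-th squarefree power `I(Δ)^{[k]}` of the facet ideal of `Δ`. -/
def sqfreePower (K : Type) [Field K] {V : Type} [DecidableEq V]
    (Δ : SimplicialComplex V) (k : ℕ) : Ideal (MvPolynomial V K) :=
  matchPow K Δ.facets k

/-- `p` is a monomial with coefficient `1`. -/
def IsMonomialOne {K : Type} [Field K] {V : Type} (p : MvPolynomial V K) : Prop :=
  ∃ d : V →₀ ℕ, p = monomial d 1

/-- `u` is a minimal monomial generator of the monomial ideal `I`: `u` is a
monomial of `I` which is not strictly divisible by any monomial of `I`. -/
def IsMinGen {K : Type} [Field K] {V : Type} (I : Ideal (MvPolynomial V K))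
    (u : MvPolynomial V K) : Prop :=
  IsMonomialOne u ∧ u ∈ I ∧
    ∀ v : MvPolynomial V K, IsMonomialOne v → v ∈ I → v ∣ u → v = u

/-- A monomial ideal `I` has linear quotients: its minimal monomial generators
can be listed as `f₁, …, f_m` so that each colon ideal
`(f₁, …, f_{i-1}) : (f_i)` is generated by a subset of the variables. -/
def HasLinearQuotients {K : Type} [Field K] {V : Type}
    (I : Ideal (MvPolynomial V K)) : Prop :=
  ∃ L : List (MvPolynomial V K), L.Nodup ∧ (∀ u, u ∈ L ↔ IsMinGen I u) ∧
    ∀ i : ℕ, ∀ hi : i < L.length, 1 ≤ i →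
      ∃ s : Set V,
        Submodule.colon (Ideal.span {q | q ∈ L.take i}) (Ideal.span {L.get ⟨i, hi⟩}) =
          Ideal.span ((fun v => (X v : MvPolynomial V K)) '' s)

/-- The degree of the monomial with exponent vector `d`. -/
def degOf {V : Type} (d : V →₀ ℕ) : ℕ := d.sum fun _ n => n

/-- The edge relation of the induced graph `G_I^{(u,v)}` of Bigdeli–Herzog–Zheng,
for a monomial ideal `I` generated in degree `d`, where `m` is the exponent
vector of `lcm(u, v)`: two minimal monomial generators (identified with their
exponent vectors) dividing `lcm(u, v)` are adjacent when their lcm has degree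
`d + 1`. -/
def EdgeRel (K : Type) [Field K] {V : Type} [DecidableEq V]
    (I : Ideal (MvPolynomial V K)) (d : ℕ) (m : V →₀ ℕ) (u v : V →₀ ℕ) : Prop :=
  IsMinGen I (monomial u (1 : K)) ∧ IsMinGen I (monomial v (1 : K)) ∧
    u ≤ m ∧ v ≤ m ∧ degOf (u ⊔ v) = d + 1

/-- The combinatorial criterion of Bigdeli–Herzog–Zheng for a monomial ideal `I`
generated in degree `d` to be linearly related: any two minimal monomial
generators `u`, `v` are connected by a path in `G_I^{(u,v)}`. -/
def LinearlyRelatedVia (K : Type) [Field K] {V : Type} [DecidableEq V]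
    (I : Ideal (MvPolynomial V K)) (d : ℕ) : Prop :=
  ∀ a b : V →₀ ℕ, IsMinGen I (monomial a (1 : K)) → IsMinGen I (monomial b (1 : K)) →
    Relation.ReflTransGen (EdgeRel K I d (a ⊔ b)) a b

/-- The `t`-path simplicial tree `Γ_{n,t}` of the path graph `P_n` on the
vertices `1, …, n`: its facets are the intervals `F_i = {i, …, i + t - 1}` for
`1 ≤ i ≤ n - t + 1`. -/
def pathFacets (n t : ℕ) : Finset (Finset ℕ) :=
  (Finset.Icc 1 (n - t + 1)).image fun i => Finset.Icc i (i + t - 1)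

/-- The `t`-path simplicial tree `Γ_{n,t}` of the path graph `P_n`. -/
def pathComplex (n t : ℕ) : SimplicialComplex ℕ := ofFacets (pathFacets n t)

namespace SimplicialComplex

variable {V : Type} [DecidableEq V]

theorem isAntichain_facets (Δ : SimplicialComplex V) :
    IsAntichain (· ⊆ ·) (Δ.facets : Set (Finset V)) := by
  intro F hF G hG hFG hsub
  simp only [coe_filter, facets, Set.mem_ofPred_eq] at hF hG
  exact hFG (hF.2 G hG.1 hsub)

theorem IsLeafIn.mem_of_subset_biUnion {S A : Finset (Finset V)} {F : Finset V}
    (hS : IsAntichain (· ⊆ ·) (S : Set (Finset V))) (hF : IsLeafIn S F) (hAS : A ⊆ S)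
    (hA : A.Nonempty) (hFA : F ⊆ A.biUnion id) : F ∈ A := by
  by_contra hFA'
  obtain ⟨hFS, rfl | ⟨G, hGS, hGF, hG⟩⟩ := hF
  · obtain ⟨H, hH⟩ := hA
    exact hFA' (mem_singleton.mp (hAS hH) ▸ hH)
  · refine hS hFS hGS hGF.symm fun v hv => ?_
    obtain ⟨H, hHA, hvH⟩ := mem_biUnion.mp (hFA hv)
    have hHF : H ≠ F := fun h => hFA' (h ▸ hHA)
    exact (mem_inter.mp (hG H (hAS hHA) hHF (mem_inter.mpr ⟨hvH, hv⟩))).1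

theorem IsMatching.erase {Δ : SimplicialComplex V} {M : Finset (Finset V)}
    (hM : Δ.IsMatching M) (F : Finset V) : Δ.IsMatching (M.erase F) :=
  ⟨(erase_subset F M).trans hM.1,
    fun A hA B hB => hM.2 A (mem_of_mem_erase hA) B (mem_of_mem_erase hB)⟩

theorem IsMatching.biUnion_erase {Δ : SimplicialComplex V} {M : Finset (Finset V)}
    {F : Finset V} (hM : Δ.IsMatching M) (hF : F ∈ M) :
    (M.erase F).biUnion id = M.biUnion id \ F := by
  ext v
  simp only [mem_biUnion, mem_sdiff, mem_erase, id]
  constructor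
  · rintro ⟨H, ⟨hHF, hHM⟩, hv⟩
    refine ⟨⟨H, hHM, hv⟩, fun hvF => ?_⟩
    simpa [hM.2 H hHM F hF hHF] using mem_inter.mpr ⟨hv, hvF⟩
  · rintro ⟨⟨H, hHM, hv⟩, hvF⟩
    exact ⟨H, ⟨fun h => hvF (h ▸ hv), hHM⟩, hv⟩

/-- A leaf of `M ∪ M'` lies in both matchings; remove it and induct on the size. -/
theorem IsForest.eq_of_biUnion_eq {Δ : SimplicialComplex V} (hΔ : Δ.IsForest)
    {M M' : Finset (Finset V)} (hM : Δ.IsMatching M) (hM' : Δ.IsMatching M')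
    (hcard : M.card = M'.card) (hU : M.biUnion id = M'.biUnion id) : M = M' := by
  induction h : M.card generalizing M M' with
  | zero => rw [card_eq_zero.mp h, card_eq_zero.mp (hcard.symm.trans h)]
  | succ n ih =>
    have hMne : M.Nonempty := card_pos.mp (by omega)
    have hM'ne : M'.Nonempty := card_pos.mp (by omega)
    have hMM' : M ∪ M' ⊆ Δ.facets := union_subset hM.1 hM'.1
    obtain ⟨F, hF⟩ := hΔ (M ∪ M') hMM' (hMne.mono subset_union_left)
    have hanti := Δ.isAntichain_facets.subset (coe_subset.mpr hMM')
    have hFU : F ⊆ M.biUnion id := by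
      rcases mem_union.mp hF.1 with hFM | hFM'
      · exact subset_biUnion_of_mem id hFM
      · exact hU ▸ subset_biUnion_of_mem id hFM'
    have hFM := hF.mem_of_subset_biUnion hanti subset_union_left hMne hFU
    have hFM' := hF.mem_of_subset_biUnion hanti subset_union_right hM'ne (hU ▸ hFU)
    have herase : M.erase F = M'.erase F := by
      refine ih (hM.erase F) (hM'.erase F) ?_ ?_ ?_
      · rw [card_erase_of_mem hFM, card_erase_of_mem hFM', hcard]
      · rw [hM.biUnion_erase hFM, hM'.biUnion_erase hFM', hU]
      · rw [card_erase_of_mem hFM, h, Nat.add_sub_cancel]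
    rw [← insert_erase hFM, ← insert_erase hFM', herase]

end SimplicialComplex

section Monomials

variable {K : Type} [Field K] {V : Type}

theorem isMonomialOne_X (v : V) : IsMonomialOne (X v : MvPolynomial V K) :=
  ⟨Finsupp.single v 1, rfl⟩

theorem IsMonomialOne.prod {ι : Type} (s : Finset ι) {f : ι → MvPolynomial V K}
    (hf : ∀ i ∈ s, IsMonomialOne (f i)) : IsMonomialOne (∏ i ∈ s, f i) := by
  classical
  choose! d hd using hf
  exact ⟨∑ i ∈ s, d i, by rw [monomial_sum_one]; exact prod_congr rfl hd⟩

theorem isMonomialOne_prod_prod_X (M : Finset (Finset V)) :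
    IsMonomialOne (∏ F ∈ M, ∏ v ∈ F, (X v : MvPolynomial V K)) :=
  .prod M fun F _ => .prod F fun v _ => isMonomialOne_X v

/-- Some spanning monomial divides `u`, and minimality forces equality. -/
theorem IsMinGen.mem_of_span {G : Set (MvPolynomial V K)} (hG : ∀ g ∈ G, IsMonomialOne g)
    {u : MvPolynomial V K} (hu : IsMinGen (Ideal.span G) u) : u ∈ G := by
  classical
  have hGeq : G = (fun d => monomial d (1 : K)) '' {d | monomial d 1 ∈ G} := by
    ext g
    refine ⟨fun hg => ?_, fun ⟨d, hd, hdg⟩ => hdg ▸ hd⟩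
    obtain ⟨d, rfl⟩ := hG g hg
    exact ⟨d, hg, rfl⟩
  obtain ⟨⟨d, rfl⟩, hmem, hmin⟩ := hu
  rw [hGeq] at hmem hmin
  obtain ⟨e, he, hdvd⟩ := mem_ideal_span_monomial_image_iff_dvd.mp hmem d
    (by simp [support_monomial])
  rw [coeff_monomial, if_pos rfl] at hdvd
  rwa [← hmin _ ⟨e, rfl⟩ (Ideal.subset_span ⟨e, he, rfl⟩) hdvd]

theorem X_dvd_prod_prod_X_iff [DecidableEq V] (M : Finset (Finset V)) (v : V) :
    (X v : MvPolynomial V K) ∣ ∏ F ∈ M, ∏ w ∈ F, X w ↔ v ∈ M.biUnion id := by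
  simp only [X_prime.dvd_finsetProd_iff, X_dvd_X, mem_biUnion, id, exists_eq_right']

theorem biUnion_eq_of_prod_prod_X_eq [DecidableEq V] {M M' : Finset (Finset V)}
    (h : ∏ F ∈ M, ∏ v ∈ F, (X v : MvPolynomial V K) = ∏ F ∈ M', ∏ v ∈ F, X v) :
    M.biUnion id = M'.biUnion id := by
  ext v
  rw [← X_dvd_prod_prod_X_iff (K := K), h, X_dvd_prod_prod_X_iff]

end Monomials

theorem minGen_sqfreePower_unique_matching_general
    (K : Type) [Field K] {V : Type} [DecidableEq V]
    (Δ : SimplicialComplex V) (hΔ : Δ.IsForest)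
    (k : ℕ)
    (u : MvPolynomial V K) (hu : IsMinGen (sqfreePower K Δ k) u) :
    ∃! M : Finset (Finset V), Δ.IsMatching M ∧ M.card = k ∧
      u = ∏ F ∈ M, ∏ v ∈ F, (X v : MvPolynomial V K) := by
  obtain ⟨M, hMf, hMd, hMk, rfl⟩ := hu.mem_of_span (by
    rintro _ ⟨M, -, -, -, rfl⟩; exact isMonomialOne_prod_prod_X M)
  refine ⟨M, ⟨⟨hMf, hMd⟩, hMk, rfl⟩, fun M' ⟨hM', hM'k, hprod⟩ => ?_⟩
  exact hΔ.eq_of_biUnion_eq hM' ⟨hMf, hMd⟩ (hM'k.trans hMk.symm)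
    (biUnion_eq_of_prod_prod_X_eq hprod.symm)

/-- Every minimal monomial generator of the `k`-th squarefree
power of the facet ideal of a simplicial forest is the product of the facet
monomials of a unique `k`-matching. -/
theorem minGen_sqfreePower_unique_matching
    (K : Type) [Field K] {V : Type} [DecidableEq V]
    (Δ : SimplicialComplex V) (hΔ : Δ.IsForest)
    (k : ℕ) (hk1 : 1 ≤ k) (hk2 : k ≤ Δ.matchingNumber)
    (u : MvPolynomial V K) (hu : IsMinGen (sqfreePower K Δ k) u) :
    ∃! M : Finset (Finset V), Δ.IsMatching M ∧ M.card = k ∧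
      u = ∏ F ∈ M, ∏ v ∈ F, (X v : MvPolynomial V K) :=
  minGen_sqfreePower_unique_matching_general K Δ hΔ k u hu
end
end

section
/- Let Δ be a simplicial forest. Then ν(Δ) − ν₀(Δ) ≤ 1, i.e., ν(Δ) ≤ ν₀(Δ) + 1. -/
noncomputable section

open Finset MvPolynomial

/-!
Join two facets of a matching when they fail to form a gap. In a simplicial forest this graph
is acyclic: for a cycle `K₀, …, Kₘ₋₁` with witnesses `Hᵢ ⊆ Kᵢ ∪ Kᵢ₊₁`, the facets `Hᵢ` together
with those `Kᵢ` at which `Hᵢ₋₁` and `Hᵢ` are disjoint form a subcomplex without a leaf.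
So a maximum matching `M` with at least two facets has a facet `F` with at most one neighbour
`D`, and `M \ {D}` is a restricted matching in which `F` forms a gap with every other facet.
-/

namespace SimpleGraph

variable {W : Type*} {G : SimpleGraph W}

/-- The first vertex of a longest path has at most one neighbour. -/
lemma IsAcyclic.exists_ne_forall_adj_eq [Finite W] [Nontrivial W] (hG : G.IsAcyclic) :
    ∃ u w, u ≠ w ∧ ∀ x, G.Adj u x → x = w := by
  obtain ⟨u, v, p, hp, hmax⟩ := Walk.exists_isPath_forall_isPath_length_le_length G
  have hsnd : ∀ x, G.Adj u x → x = p.snd := fun x hx => hG.eq_snd_of_adj_start hp hx <| by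
    by_contra hx'
    simpa using hmax _ _ _ (hp.cons hx' : (Walk.cons hx.symm p).IsPath)
  by_cases hu : p.snd = u
  · obtain ⟨w, hw⟩ := exists_ne u
    exact ⟨u, w, hw.symm, fun x hx => absurd ((hsnd x hx).trans hu) hx.ne.symm⟩
  · exact ⟨u, p.snd, Ne.symm hu, hsnd⟩

end SimpleGraph


namespace Fin

variable {n : ℕ} [NeZero n]

open Fin.CommRing in
lemma add_one_ne (hn : 1 < n) (a : Fin n) : a + 1 ≠ a := by
  intro h
  have h1 : ((1 : ℕ) : Fin n) = 0 := by linear_combination h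
  rw [Fin.natCast_eq_zero] at h1
  rw [Nat.dvd_one] at h1
  omega

lemma sub_one_ne (hn : 1 < n) (a : Fin n) : a - 1 ≠ a :=
  fun h => add_one_ne hn (a - 1) (by rw [sub_add_cancel]; exact h.symm)

open Fin.CommRing in
lemma sub_one_ne_add_one (hn : 2 < n) (a : Fin n) : a - 1 ≠ a + 1 := by
  intro h
  have h2 : ((2 : ℕ) : Fin n) = 0 := by linear_combination -h
  rw [Fin.natCast_eq_zero] at h2
  have := Nat.le_of_dvd (by norm_num) h2
  omega

end Fin

lemma Finset.mem_of_inter_subset_inter {α : Type*} [DecidableEq α] {s t u : Finset α} {x : α}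
    (h : s ∩ u ⊆ t ∩ u) (hs : x ∈ s) (hu : x ∈ u) : x ∈ t :=
  (Finset.mem_inter.mp (h (Finset.mem_inter.mpr ⟨hs, hu⟩))).1

namespace SimplicialComplex

variable {V : Type} [DecidableEq V] {Δ : SimplicialComplex V}

lemma eq_of_mem_facets_of_subset {F G : Finset V} (hF : F ∈ Δ.facets) (hG : G ∈ Δ.facets)
    (h : F ⊆ G) : F = G := by
  classical
  rw [facets, Finset.mem_filter] at hF hG
  exact hF.2 G hG.1 h

structure IsNonGapCycle {n : ℕ} [NeZero n] (Δ : SimplicialComplex V)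
    (K H : Fin n → Finset V) : Prop where
  three_le : 3 ≤ n
  K_mem : ∀ i, K i ∈ Δ.facets
  H_mem : ∀ i, H i ∈ Δ.facets
  pairwise_disjoint : Pairwise fun i j => Disjoint (K i) (K j)
  H_subset : ∀ i, H i ⊆ K i ∪ K (i + 1)
  H_ne_left : ∀ i, H i ≠ K i
  H_ne_right : ∀ i, H i ≠ K (i + 1)

def cycleFamily {n : ℕ} [NeZero n] (K H : Fin n → Finset V) : Finset (Finset V) :=
  Finset.univ.image H ∪ (Finset.univ.filter fun a => Disjoint (H (a - 1)) (H a)).image K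

variable {n : ℕ} [NeZero n] {K H : Fin n → Finset V} {x : V} {a b : Fin n} {B G : Finset V}

lemma mem_cycleFamily :
    B ∈ cycleFamily K H ↔ (∃ a, H a = B) ∨ ∃ a, Disjoint (H (a - 1)) (H a) ∧ K a = B := by
  simp [cycleFamily]

lemma H_mem_cycleFamily (a : Fin n) : H a ∈ cycleFamily K H :=
  mem_cycleFamily.mpr (Or.inl ⟨a, rfl⟩)

lemma K_mem_cycleFamily (h : Disjoint (H (a - 1)) (H a)) : K a ∈ cycleFamily K H :=
  mem_cycleFamily.mpr (Or.inr ⟨a, h, rfl⟩)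

namespace IsNonGapCycle

lemma one_lt (hc : Δ.IsNonGapCycle K H) : 1 < n := by
  have := hc.three_le
  omega

lemma eq_of_mem_K (hc : Δ.IsNonGapCycle K H) (ha : x ∈ K a) (hb : x ∈ K b) : a = b := by
  by_contra hab
  exact Finset.disjoint_left.mp (hc.pairwise_disjoint hab) ha hb

lemma eq_or_eq_add_one_of_mem_H (hc : Δ.IsNonGapCycle K H) (hH : x ∈ H a) (hK : x ∈ K b) :
    b = a ∨ b = a + 1 := by
  rcases Finset.mem_union.mp (hc.H_subset a hH) with h | h
  · exact Or.inl (hc.eq_of_mem_K hK h)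
  · exact Or.inr (hc.eq_of_mem_K hK h)

lemma exists_mem_H_mem_K (hc : Δ.IsNonGapCycle K H) (a : Fin n) : ∃ x ∈ H a, x ∈ K a := by
  by_contra! h
  refine hc.H_ne_right a (eq_of_mem_facets_of_subset (hc.H_mem a) (hc.K_mem _) fun x hx => ?_)
  exact (Finset.mem_union.mp (hc.H_subset a hx)).resolve_left (h x hx)

lemma exists_mem_H_mem_K_add_one (hc : Δ.IsNonGapCycle K H) (a : Fin n) :
    ∃ x ∈ H a, x ∈ K (a + 1) := by
  by_contra! h
  refine hc.H_ne_left a (eq_of_mem_facets_of_subset (hc.H_mem a) (hc.K_mem _) fun x hx => ?_)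
  exact (Finset.mem_union.mp (hc.H_subset a hx)).resolve_right (h x hx)

lemma H_ne_K (hc : Δ.IsNonGapCycle K H) (a b : Fin n) : H a ≠ K b := by
  intro h
  obtain ⟨x, hxH, hxK⟩ := hc.exists_mem_H_mem_K a
  have hab : a = b := hc.eq_of_mem_K hxK (h ▸ hxH)
  exact hc.H_ne_left a (hab ▸ h)

lemma H_injective (hc : Δ.IsNonGapCycle K H) : Function.Injective H := by
  intro a b h
  obtain ⟨x, hxH, hxK⟩ := hc.exists_mem_H_mem_K a
  obtain ⟨y, hyH, hyK⟩ := hc.exists_mem_H_mem_K_add_one a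
  rcases hc.eq_or_eq_add_one_of_mem_H (h ▸ hxH) hxK with hx | hx
  · exact hx
  rcases hc.eq_or_eq_add_one_of_mem_H (h ▸ hyH) hyK with hy | hy
  · subst hy
    exact absurd (by rw [add_sub_cancel_right]; exact hx) (Fin.sub_one_ne_add_one hc.three_le (a + 1))
  · exact add_right_cancel hy

lemma K_injective (hc : Δ.IsNonGapCycle K H) : Function.Injective K := by
  intro a b h
  obtain ⟨x, -, hx⟩ := hc.exists_mem_H_mem_K a
  exact hc.eq_of_mem_K hx (h ▸ hx)

lemma mem_K_of_mem_H_sub_one_of_mem_H (hc : Δ.IsNonGapCycle K H) (h₁ : x ∈ H (a - 1))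
    (h₂ : x ∈ H a) : x ∈ K a := by
  refine (Finset.mem_union.mp (hc.H_subset a h₂)).resolve_right fun hx => ?_
  rcases hc.eq_or_eq_add_one_of_mem_H h₁ hx with h | h
  · exact Fin.sub_one_ne_add_one hc.three_le a h.symm
  · exact Fin.add_one_ne hc.one_lt a (h.trans (sub_add_cancel a 1))
lemma cycleFamily_subset (hc : Δ.IsNonGapCycle K H) : cycleFamily K H ⊆ Δ.facets := by
  intro B hB
  rcases mem_cycleFamily.mp hB with ⟨a, rfl⟩ | ⟨a, -, rfl⟩
  · exact hc.H_mem a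
  · exact hc.K_mem a

lemma eq_of_mem_cycleFamily (hc : Δ.IsNonGapCycle K H) (hB : B ∈ cycleFamily K H)
    (hxB : x ∈ B) (hxK : x ∈ K a) :
    B = H (a - 1) ∨ B = H a ∨ (Disjoint (H (a - 1)) (H a) ∧ B = K a) := by
  rcases mem_cycleFamily.mp hB with ⟨c, rfl⟩ | ⟨c, hkept, rfl⟩
  · rcases hc.eq_or_eq_add_one_of_mem_H hxB hxK with rfl | rfl
    · exact Or.inr (Or.inl rfl)
    · exact Or.inl (by rw [add_sub_cancel_right])
  · obtain rfl := hc.eq_of_mem_K hxB hxK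
    exact Or.inr (Or.inr ⟨hkept, rfl⟩)

lemma not_isLeafIn_K (hc : Δ.IsNonGapCycle K H) (hkept : Disjoint (H (a - 1)) (H a))
    (hG : G ∈ cycleFamily K H) (hGa : G ≠ K a)
    (hjoint : ∀ B ∈ cycleFamily K H, B ≠ K a → B ∩ K a ⊆ G ∩ K a) : False := by
  obtain ⟨x, hxH, hxK⟩ := hc.exists_mem_H_mem_K_add_one (a - 1)
  rw [sub_add_cancel] at hxK
  obtain ⟨y, hyH, hyK⟩ := hc.exists_mem_H_mem_K a
  have hxG := mem_of_inter_subset_inter (hjoint _ (H_mem_cycleFamily _) (hc.H_ne_K _ _)) hxH hxK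
  have hyG := mem_of_inter_subset_inter (hjoint _ (H_mem_cycleFamily _) (hc.H_ne_K _ _)) hyH hyK
  rcases hc.eq_of_mem_cycleFamily hG hxG hxK with rfl | rfl | ⟨-, rfl⟩
  · exact Finset.disjoint_left.mp hkept hyG hyH
  · exact Finset.disjoint_left.mp hkept hxH hxG
  · exact hGa rfl

lemma joint_H_left (hc : Δ.IsNonGapCycle K H) (hG : G ∈ cycleFamily K H) (hGa : G ≠ H a)
    (hjoint : ∀ B ∈ cycleFamily K H, B ≠ H a → B ∩ H a ⊆ G ∩ H a) :
    G = H (a - 1) ∨ G = K a := by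
  by_cases hkept : Disjoint (H (a - 1)) (H a)
  · obtain ⟨y, hyH, hyK⟩ := hc.exists_mem_H_mem_K a
    have hyG := mem_of_inter_subset_inter
      (hjoint _ (K_mem_cycleFamily hkept) (hc.H_ne_K a a).symm) hyK hyH
    rcases hc.eq_of_mem_cycleFamily hG hyG hyK with rfl | rfl | ⟨-, rfl⟩
    · exact absurd hyH (Finset.disjoint_left.mp hkept hyG)
    · exact absurd rfl hGa
    · exact Or.inr rfl
  · obtain ⟨x, hx₁, hx₂⟩ := Finset.not_disjoint_iff.mp hkept
    have hxK := hc.mem_K_of_mem_H_sub_one_of_mem_H hx₁ hx₂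
    have hxG := mem_of_inter_subset_inter
      (hjoint _ (H_mem_cycleFamily _) (hc.H_injective.ne (Fin.sub_one_ne hc.one_lt a))) hx₁ hx₂
    rcases hc.eq_of_mem_cycleFamily hG hxG hxK with h | rfl | ⟨h, -⟩
    · exact Or.inl h
    · exact absurd rfl hGa
    · exact absurd h hkept

lemma joint_H_right (hc : Δ.IsNonGapCycle K H) (hG : G ∈ cycleFamily K H) (hGa : G ≠ H a)
    (hjoint : ∀ B ∈ cycleFamily K H, B ≠ H a → B ∩ H a ⊆ G ∩ H a) :
    G = H (a + 1) ∨ G = K (a + 1) := by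
  by_cases hkept : Disjoint (H (a + 1 - 1)) (H (a + 1))
  · obtain ⟨x, hxH, hxK⟩ := hc.exists_mem_H_mem_K_add_one a
    have hxG := mem_of_inter_subset_inter
      (hjoint _ (K_mem_cycleFamily hkept) (hc.H_ne_K a _).symm) hxK hxH
    rw [add_sub_cancel_right] at hkept
    rcases hc.eq_of_mem_cycleFamily hG hxG hxK with h | rfl | ⟨-, rfl⟩
    · exact absurd (by rwa [add_sub_cancel_right] at h) hGa
    · exact absurd hxG (Finset.disjoint_left.mp hkept hxH)
    · exact Or.inr rfl
  · obtain ⟨x, hx₁, hx₂⟩ := Finset.not_disjoint_iff.mp hkept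
    have hxK := hc.mem_K_of_mem_H_sub_one_of_mem_H hx₁ hx₂
    rw [add_sub_cancel_right] at hx₁
    have hxG := mem_of_inter_subset_inter
      (hjoint _ (H_mem_cycleFamily _) (hc.H_injective.ne (Fin.add_one_ne hc.one_lt a))) hx₂ hx₁
    rcases hc.eq_of_mem_cycleFamily hG hxG hxK with h | h | ⟨h, -⟩
    · exact absurd (by rwa [add_sub_cancel_right] at h) hGa
    · exact Or.inl h
    · exact absurd h hkept

lemma not_isLeafIn (hc : Δ.IsNonGapCycle K H) (L : Finset V) : ¬ IsLeafIn (cycleFamily K H) L := by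
  rintro ⟨hL, hsingle | ⟨G, hG, hGL, hjoint⟩⟩
  · have h01 : H 0 = H 1 := by
      have h₀ := H_mem_cycleFamily (K := K) (H := H) 0
      have h₁ := H_mem_cycleFamily (K := K) (H := H) 1
      rw [hsingle, Finset.mem_singleton] at h₀ h₁
      rw [h₀, h₁]
    exact Fin.add_one_ne hc.one_lt 0 (by rw [zero_add]; exact (hc.H_injective h01).symm)
  rcases mem_cycleFamily.mp hL with ⟨a, rfl⟩ | ⟨a, hkept, rfl⟩
  · rcases hc.joint_H_left hG hGL hjoint with rfl | rfl <;>
      rcases hc.joint_H_right hG hGL hjoint with h | h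
    · exact Fin.sub_one_ne_add_one hc.three_le a (hc.H_injective h)
    · exact hc.H_ne_K _ _ h
    · exact hc.H_ne_K _ _ h.symm
    · exact Fin.add_one_ne hc.one_lt a (hc.K_injective h).symm
  · exact hc.not_isLeafIn_K hkept hG hGL hjoint

theorem not_isForest (hc : Δ.IsNonGapCycle K H) : ¬ Δ.IsForest := fun hΔ =>
  let ⟨L, hL⟩ := hΔ _ hc.cycleFamily_subset ⟨H 0, H_mem_cycleFamily 0⟩
  hc.not_isLeafIn L hL

end IsNonGapCycle

variable {M : Finset (Finset V)}

/-- On a matching `M`, adjacency is the failure to form a gap. -/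
def nonGapGraph (Δ : SimplicialComplex V) (M : Finset (Finset V)) : SimpleGraph M where
  Adj F G := F ≠ G ∧ ∃ H ∈ Δ.facets, H ⊆ F.1 ∪ G.1 ∧ H ≠ F.1 ∧ H ≠ G.1
  symm := ⟨fun _ _ ⟨hne, H, hH, hsub, h₁, h₂⟩ =>
    ⟨hne.symm, H, hH, hsub.trans (Finset.union_comm _ _).subset, h₂, h₁⟩⟩
  loopless := ⟨fun _ h => h.1 rfl⟩

lemma nonGapGraph_adj {F G : M} : (Δ.nonGapGraph M).Adj F G ↔
    F ≠ G ∧ ∃ H ∈ Δ.facets, H ⊆ F.1 ∪ G.1 ∧ H ≠ F.1 ∧ H ≠ G.1 :=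
  Iff.rfl

lemma IsMatching.formGap_of_not_adj (hM : Δ.IsMatching M) {F G : M} (hFG : F ≠ G)
    (h : ¬ (Δ.nonGapGraph M).Adj F G) : Δ.FormGap F G := by
  refine ⟨hM.1 F.2, hM.1 G.2, hM.2 _ F.2 _ G.2 (Subtype.coe_ne_coe.mpr hFG), fun H hH hsub => ?_⟩
  by_contra! hne
  exact h (nonGapGraph_adj.mpr ⟨hFG, H, hH, hsub, hne⟩)

lemma IsForest.isAcyclic_nonGapGraph (hΔ : Δ.IsForest) (hM : Δ.IsMatching M) :
    (Δ.nonGapGraph M).IsAcyclic := by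
  rw [SimpleGraph.isAcyclic_iff_free_cycleGraph]
  rintro n hn ⟨f⟩
  obtain ⟨m, rfl⟩ : ∃ m, n = m + 3 := ⟨n - 3, by omega⟩
  have hadj (i : Fin (m + 3)) : (Δ.nonGapGraph M).Adj (f i) (f (i + 1)) :=
    f.toHom.map_adj (SimpleGraph.cycleGraph_adj.mpr (Or.inr (add_sub_cancel_left i 1)))
  choose H hH hsub hne₁ hne₂ using fun i => (nonGapGraph_adj.mp (hadj i)).2
  refine IsNonGapCycle.not_isForest ⟨by omega, fun i => hM.1 (f i).2, hH, fun i j hij => ?_,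
    hsub, hne₁, hne₂⟩ hΔ
  exact Finset.disjoint_iff_inter_eq_empty.mpr
    (hM.2 _ (f i).2 _ (f j).2 (Subtype.coe_ne_coe.mpr (f.injective.ne hij)))

lemma IsForest.exists_forall_formGap (hΔ : Δ.IsForest) (hM : Δ.IsMatching M)
    (hcard : 1 < M.card) :
    ∃ F ∈ M, ∃ D ∈ M, D ≠ F ∧ ∀ G ∈ M, G ≠ F → G ≠ D → Δ.FormGap F G := by
  have : Nontrivial M := (Finset.one_lt_card_iff_nontrivial.mp hcard).coe_sort
  obtain ⟨F, D, hFD, hD⟩ := (hΔ.isAcyclic_nonGapGraph hM).exists_ne_forall_adj_eq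
  refine ⟨F, F.2, D, D.2, Subtype.coe_ne_coe.mpr hFD.symm, fun G hG hGF hGD => ?_⟩
  refine hM.formGap_of_not_adj (G := ⟨G, hG⟩) (fun h => hGF (congrArg Subtype.val h).symm) ?_
  exact fun hadj => hGD (congrArg Subtype.val (hD _ hadj))

lemma IsMatching.isRestrictedMatching_erase (hM : Δ.IsMatching M) {F D : Finset V} (hF : F ∈ M)
    (hDF : D ≠ F) (hgap : ∀ G ∈ M, G ≠ F → G ≠ D → Δ.FormGap F G) :
    Δ.IsRestrictedMatching (M.erase D) := by
  refine ⟨⟨(M.erase_subset D).trans hM.1, fun A hA B hB =>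
    hM.2 A (Finset.mem_of_mem_erase hA) B (Finset.mem_of_mem_erase hB)⟩,
    F, Finset.mem_erase.mpr ⟨hDF.symm, hF⟩, fun G hG hGF => ?_⟩
  obtain ⟨hGD, hGM⟩ := Finset.mem_erase.mp hG
  exact hgap G hGM hGF hGD

lemma exists_isMatching_card_eq_matchingNumber (Δ : SimplicialComplex V) :
    ∃ M, Δ.IsMatching M ∧ M.card = Δ.matchingNumber := by
  refine Nat.sSup_mem (s := {r | ∃ M, Δ.IsMatching M ∧ M.card = r})
    ⟨0, ∅, ⟨Finset.empty_subset _, by simp⟩, rfl⟩ ⟨Δ.facets.card, ?_⟩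
  rintro r ⟨M, hM, rfl⟩
  exact Finset.card_le_card hM.1

lemma IsRestrictedMatching.card_le (hM : Δ.IsRestrictedMatching M) :
    M.card ≤ Δ.restrictedMatchingNumber := by
  refine le_csSup ⟨Δ.facets.card, ?_⟩ ⟨M, hM, rfl⟩
  rintro r ⟨M, hM, rfl⟩
  exact Finset.card_le_card hM.1.1

end SimplicialComplex

/-- For a simplicial forest, `ν(Δ) ≤ ν₀(Δ) + 1`. -/
theorem matchingNumber_le_restrictedMatchingNumber_add_one
    {V : Type} [DecidableEq V] (Δ : SimplicialComplex V) (hΔ : Δ.IsForest) :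
    Δ.matchingNumber ≤ Δ.restrictedMatchingNumber + 1 := by
  obtain ⟨M, hM, hcard⟩ := Δ.exists_isMatching_card_eq_matchingNumber
  rcases le_or_gt M.card 1 with hle | hlt
  · omega
  obtain ⟨F, hF, D, hD, hDF, hgap⟩ := hΔ.exists_forall_formGap hM hlt
  have := (hM.isRestrictedMatching_erase hF hDF hgap).card_le
  rw [Finset.card_erase_of_mem hD] at this
  omega

end
end

section
/- Let 2 ≤ t ≤ n and let Γ_{n,t} be the t-path simplicial tree of the path graph P_n. Then I_{n,t}^{[ν₀(Γ_{n,t})]} has linear quotients. -/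
noncomputable section

open Finset MvPolynomial

/-!
Write a `k`-matching of `Γ_{n,t}` as `k` intervals of length `t`, the `i`-th one starting at
`1 + i t + d i`: this identifies the `k`-matchings with the monotone offset vectors `d` bounded by
`n - k t`. A facet forming a gap with its neighbour forces a jump of `d`, so a restricted matching
with at least two facets has `0 < d ≤ n - k t` somewhere, and the offsets `(0, 1, …, 1)` attain
this bound. Hence `ν₀(Γ_{n,t}) = max 1 ⌊(n-1)/t⌋`, and `k = ν₀` has slack `s = n - k t ≤ t`.

List the generators in decreasing lexicographic order of `d`. If `A` precedes `B`, let `l` be the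
last index with `B l < A l`; shifting the `l`-th interval of `B` one step to the right gives an
earlier generator `C` whose support adds to that of `B` a single vertex, and this vertex lies in
the support of `A` because `A l ≤ s ≤ t`. This exchange property is linearity of the quotients.
-/

section LinearQuotients

variable {K : Type} [Field K] {V : Type}

theorem List.SortedLT.mem_take_iff {ι : Type} [LinearOrder ι] {l : List ι} (hl : l.SortedLT)
    {i : ℕ} (hi : i < l.length) {c : ι} : c ∈ l.take i ↔ c ∈ l ∧ c < l[i] := by
  rw [List.mem_take_iff_getElem]
  constructor
  · rintro ⟨j, hj, rfl⟩
    exact ⟨List.getElem_mem _, hl.getElem_lt_getElem_iff.2 (by omega)⟩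
  · rintro ⟨hc, hlt⟩
    obtain ⟨j, hj, rfl⟩ := List.mem_iff_getElem.1 hc
    exact ⟨j, by have := hl.getElem_lt_getElem_iff.1 hlt; omega, rfl⟩

theorem colon_span_monomial_eq_span_X (E : Set (V →₀ ℕ)) (b : V →₀ ℕ) (S : Set V)
    (hS : ∀ v ∈ S, ∃ e ∈ E, e ≤ b + Finsupp.single v 1)
    (hE : ∀ e ∈ E, ∃ v ∈ S, b v < e v) :
    (Ideal.span ((fun e => monomial e (1 : K)) '' E)).colon (Ideal.span {monomial b (1 : K)}) =
      Ideal.span ((fun v => (X v : MvPolynomial V K)) '' S) := by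
  apply le_antisymm
  · intro p hp
    rw [Ideal.mem_colon_span_singleton] at hp
    rw [mem_ideal_span_X_image]
    intro m hm
    obtain ⟨e, he, hle⟩ := mem_ideal_span_monomial_image.mp hp (m + b) (by
      rwa [mem_support_iff, coeff_mul_monomial, mul_one, ← mem_support_iff])
    obtain ⟨v, hv, hbv⟩ := hE e he
    have hev := hle v
    simp only [Finsupp.coe_add, Pi.add_apply] at hev
    exact ⟨v, hv, by omega⟩
  · rw [Ideal.span_le]
    rintro _ ⟨v, hv, rfl⟩
    obtain ⟨e, he, hle⟩ := hS v hv
    rw [SetLike.mem_coe, Ideal.mem_colon_span_singleton]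
    beta_reduce
    rw [← pow_one (X v), ← monomial_single_add, add_comm]
    exact Ideal.mem_of_dvd _ (monomial_dvd_monomial.mpr ⟨Or.inr hle, dvd_rfl⟩)
      (Ideal.subset_span ⟨e, he, rfl⟩)

theorem isMinGen_span_monomial_iff {E : Set (V →₀ ℕ)} (hE : IsAntichain (· ≤ ·) E)
    (u : MvPolynomial V K) :
    IsMinGen (Ideal.span ((fun e => monomial e (1 : K)) '' E)) u ↔
      u ∈ (fun e => monomial e (1 : K)) '' E := by
  have hdom : ∀ d, monomial d (1 : K) ∈ Ideal.span ((fun e => monomial e (1 : K)) '' E) →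
      ∃ e ∈ E, e ≤ d := fun d hd =>
    mem_ideal_span_monomial_image.mp hd d (by classical simp [mem_support_iff, coeff_monomial])
  constructor
  · rintro ⟨⟨d, rfl⟩, hd, hmin⟩
    obtain ⟨e, he, hed⟩ := hdom d hd
    rw [← hmin _ ⟨e, rfl⟩ (Ideal.subset_span ⟨e, he, rfl⟩)
      (monomial_dvd_monomial.mpr ⟨Or.inr hed, dvd_rfl⟩)]
    exact ⟨e, he, rfl⟩
  · rintro ⟨e, he, rfl⟩
    refine ⟨⟨e, rfl⟩, Ideal.subset_span ⟨e, he, rfl⟩, ?_⟩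
    rintro _ ⟨d, rfl⟩ hd hde
    obtain ⟨e', he', he'd⟩ := hdom d hd
    have hde : d ≤ e := (monomial_dvd_monomial.mp hde).1.resolve_left one_ne_zero
    obtain rfl : e' = e := hE.eq he' he (he'd.trans hde)
    rw [le_antisymm hde he'd]

/-- The exchange hypothesis makes each colon ideal `(x^{f c} : c < a) : x^{f a}` generated by
the variables `x_v` for which `x_v x^{f a}` is divisible by an earlier generator. -/
theorem hasLinearQuotients_span_monomial_of_exchange {ι : Type} [LinearOrder ι]
    (D : Finset ι) (f : ι → V →₀ ℕ) (hf : ∀ a ∈ D, ∀ b ∈ D, f a ≤ f b → a = b)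
    (hexch : ∀ a ∈ D, ∀ b ∈ D, b < a →
      ∃ v, f a v < f b v ∧ ∃ c ∈ D, c < a ∧ f c ≤ f a + Finsupp.single v 1) :
    HasLinearQuotients (Ideal.span ((fun a => monomial (f a) (1 : K)) '' D)) := by
  set l := D.sort
  have hl : l.SortedLT := D.sortedLT_sort
  have hmem : ∀ a, a ∈ l ↔ a ∈ D := fun a => D.mem_sort (· ≤ ·)
  have hgen : (fun a => monomial (f a) (1 : K)) '' D =
      (fun e => monomial e (1 : K)) '' (f '' D) := by
    rw [Set.image_image]
  refine ⟨l.map fun a => monomial (f a) 1, ?_, fun u => ?_, fun i hi _ => ?_⟩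
  · refine hl.nodup.map_on fun a ha b hb hab => hf a ((hmem a).1 ha) b ((hmem b).1 hb) ?_
    exact (monomial_left_injective one_ne_zero hab).le
  · rw [hgen, isMinGen_span_monomial_iff, Set.image_image, List.mem_map]
    · simp only [hmem, Set.mem_image, Finset.mem_coe]
    · rintro _ ⟨a, ha, rfl⟩ _ ⟨b, hb, rfl⟩ hne hab
      exact hne (congrArg f (hf a ha b hb hab))
  · rw [List.length_map] at hi
    have htake : {q | q ∈ (l.map fun a => monomial (f a) (1 : K)).take i} =
        (fun e => monomial e (1 : K)) '' (f '' {c | c ∈ D ∧ c < l[i]}) := by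
      ext q
      simp [← List.map_take, hl.mem_take_iff hi, hmem, Set.image_image]
    have hla : l[i] ∈ D := (hmem _).1 (List.getElem_mem hi)
    refine ⟨{v | ∃ c ∈ D, c < l[i] ∧ f c ≤ f l[i] + Finsupp.single v 1}, ?_⟩
    rw [htake, List.get_eq_getElem, List.getElem_map]
    refine colon_span_monomial_eq_span_X _ _ _ ?_ ?_
    · rintro v ⟨c, hc, hca, hle⟩
      exact ⟨f c, ⟨c, ⟨hc, hca⟩, rfl⟩, hle⟩
    · rintro _ ⟨b, ⟨hb, hba⟩, rfl⟩
      obtain ⟨v, hv, c, hc, hca, hle⟩ := hexch _ hla b hb hba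
      exact ⟨v, ⟨c, hc, hca, hle⟩, hv⟩

end LinearQuotients

section SqfreeExp

variable {V : Type}

def sqfreeExp (S : Finset V) : V →₀ ℕ := ∑ v ∈ S, Finsupp.single v 1

theorem monomial_sqfreeExp (K : Type) [Field K] (S : Finset V) :
    monomial (sqfreeExp S) (1 : K) = ∏ v ∈ S, X v :=
  monomial_sum_one _ _

variable [DecidableEq V]

theorem sqfreeExp_apply (S : Finset V) (w : V) : sqfreeExp S w = if w ∈ S then 1 else 0 := by
  simp [sqfreeExp, Finsupp.finsetSum_apply, Finsupp.single_apply]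

theorem sqfreeExp_le_sqfreeExp {S T : Finset V} : sqfreeExp S ≤ sqfreeExp T ↔ S ⊆ T := by
  refine ⟨fun h w hw => ?_, fun h w => ?_⟩
  · have := h w
    simp only [sqfreeExp_apply, hw, if_true] at this
    split_ifs at this with hT
    · exact hT
    · omega
  · simp only [sqfreeExp_apply]
    split_ifs with hS hT <;> first | omega | exact absurd (h hS) hT

theorem sqfreeExp_le_add_single {S T : Finset V} {v : V} (h : S ⊆ insert v T) :
    sqfreeExp S ≤ sqfreeExp T + Finsupp.single v 1 := by
  intro w
  have hw := @h w
  simp only [Finsupp.coe_add, Pi.add_apply, sqfreeExp_apply, Finsupp.single_apply, mem_insert]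
    at hw ⊢
  split_ifs <;> grind

theorem prod_prod_X_eq_monomial_sqfreeExp (K : Type) [Field K] {M : Finset (Finset V)}
    (hM : ∀ F ∈ M, ∀ G ∈ M, F ≠ G → F ∩ G = ∅) :
    ∏ F ∈ M, ∏ v ∈ F, (X v : MvPolynomial V K) = monomial (sqfreeExp (M.biUnion id)) 1 := by
  rw [monomial_sqfreeExp]
  exact (prod_biUnion fun F hF G hG hFG =>
    disjoint_iff_inter_eq_empty.2 (hM F hF G hG hFG)).symm

end SqfreeExp

theorem IsAntichain.facets_ofFacets {V : Type} [DecidableEq V] {ℱ : Finset (Finset V)}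
    (hℱ : IsAntichain (· ⊆ ·) (ℱ : Set (Finset V))) (hne : ℱ.Nonempty) :
    (ofFacets ℱ).facets = ℱ := by
  have hfaces : ∀ G, G ∈ (ofFacets ℱ).faces ↔ ∃ A ∈ ℱ, G ⊆ A := fun G => by
    simp only [ofFacets, mem_insert, mem_biUnion, mem_powerset]
    refine ⟨?_, fun h => Or.inr h⟩
    rintro (rfl | h)
    · exact ⟨_, hne.choose_spec, empty_subset _⟩
    · exact h
  ext F
  simp only [SimplicialComplex.facets, mem_filter, hfaces]
  constructor
  · rintro ⟨⟨A, hA, hFA⟩, hmax⟩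
    rwa [hmax A ⟨A, hA, subset_rfl⟩ hFA]
  · intro hF
    refine ⟨⟨F, hF, subset_rfl⟩, fun G ⟨A, hA, hGA⟩ hFG => ?_⟩
    obtain rfl := hℱ.eq hF hA (hFG.trans hGA)
    exact hFG.antisymm hGA

theorem SimplicialComplex.FormGap.symm {V : Type} [DecidableEq V] {Δ : SimplicialComplex V}
    {F G : Finset V} (h : Δ.FormGap F G) : Δ.FormGap G F := by
  obtain ⟨hF, hG, hFG, hsub⟩ := h
  exact ⟨hG, hF, inter_comm F G ▸ hFG,
    fun H hH hHGF => (hsub H hH (union_comm G F ▸ hHGF)).symm⟩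

theorem SimplicialComplex.isRestrictedMatching_singleton {V : Type} [DecidableEq V]
    {Δ : SimplicialComplex V} {F : Finset V} (hF : F ∈ Δ.facets) :
    Δ.IsRestrictedMatching {F} :=
  ⟨⟨singleton_subset_iff.2 hF, fun _ hG _ hH hGH =>
    absurd ((mem_singleton.1 hG).trans (mem_singleton.1 hH).symm) hGH⟩,
    F, mem_singleton_self F, fun _ hG hGF => absurd (mem_singleton.1 hG) hGF⟩

section PathComplex

variable {n t : ℕ}

theorem Ico_add_injective (ht : 0 < t) : Function.Injective fun a : ℕ => Ico a (a + t) := by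
  intro a b h
  simp only at h
  have ha : a ∈ Ico b (b + t) := h ▸ left_mem_Ico.2 (by omega)
  have hb : b ∈ Ico a (a + t) := h.symm ▸ left_mem_Ico.2 (by omega)
  simp only [mem_Ico] at ha hb
  omega

theorem Ico_inter_Ico_add_eq_empty_iff {a b : ℕ} :
    Ico a (a + t) ∩ Ico b (b + t) = ∅ ↔ t = 0 ∨ a + t ≤ b ∨ b + t ≤ a := by
  rw [Ico_inter_Ico, Ico_eq_empty_iff]
  omega

theorem facets_pathComplex (ht : 0 < t) :
    (pathComplex n t).facets = (Icc 1 (n - t + 1)).image fun a => Ico a (a + t) := by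
  have hIco : pathFacets n t = (Icc 1 (n - t + 1)).image fun a => Ico a (a + t) := by
    refine image_congr fun a _ => ?_
    ext x
    simp only [mem_Icc, mem_Ico]
    omega
  rw [pathComplex, hIco]
  refine IsAntichain.facets_ofFacets (Set.Sized.isAntichain (r := t) ?_) (by simp)
  rintro _ h
  obtain ⟨a, -, rfl⟩ := mem_image.1 h
  simp

theorem Ico_mem_facets_pathComplex (ht : 0 < t) {a : ℕ} :
    Ico a (a + t) ∈ (pathComplex n t).facets ↔ a ∈ Icc 1 (n - t + 1) := by
  rw [facets_pathComplex ht, (Ico_add_injective ht).mem_finset_image]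

theorem formGap_pathComplex_of_lt (ht : 0 < t) {a b : ℕ} (ha : a ∈ Icc 1 (n - t + 1))
    (hb : b ∈ Icc 1 (n - t + 1)) (hab : a + t < b) :
    (pathComplex n t).FormGap (Ico a (a + t)) (Ico b (b + t)) := by
  refine ⟨(Ico_mem_facets_pathComplex ht).2 ha, (Ico_mem_facets_pathComplex ht).2 hb,
    Ico_inter_Ico_add_eq_empty_iff.2 (by omega), fun H hH hsub => ?_⟩
  rw [facets_pathComplex ht] at hH
  obtain ⟨c, -, rfl⟩ := mem_image.1 hH
  have hmem : ∀ x, c ≤ x → x < c + t → a ≤ x ∧ x < a + t ∨ b ≤ x ∧ x < b + t :=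
    fun x h1 h2 => by simpa using hsub (mem_Ico.2 ⟨h1, h2⟩)
  -- `a + t` separates the two facets, so `Ico c (c + t)` lies on one side of it
  have := hmem c; have := hmem (c + t - 1); have := hmem (a + t)
  obtain rfl | rfl : c = a ∨ c = b := by omega
  · exact Or.inl rfl
  · exact Or.inr rfl

theorem lt_of_formGap_pathComplex (ht : 2 ≤ t) {a b : ℕ}
    (h : (pathComplex n t).FormGap (Ico a (a + t)) (Ico b (b + t))) (hab : a ≤ b) :
    a + t < b := by
  obtain ⟨ha, hb, hdisj, hsub⟩ := h
  rw [Ico_mem_facets_pathComplex (by omega), mem_Icc] at ha hb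
  rw [Ico_inter_Ico_add_eq_empty_iff] at hdisj
  by_contra hle
  have hnext : Ico (a + 1) (a + 1 + t) ∈ (pathComplex n t).facets :=
    (Ico_mem_facets_pathComplex (by omega)).2 (mem_Icc.2 (by omega))
  have hcov : Ico (a + 1) (a + 1 + t) ⊆ Ico a (a + t) ∪ Ico b (b + t) := by
    intro x hx
    simp only [mem_union, mem_Ico] at hx ⊢
    omega
  rcases hsub _ hnext hcov with h | h <;>
    have := Ico_add_injective (by omega) h <;> omega

end PathComplex

section Blocks

variable {k t : ℕ}

open scoped Classical in
def offsets (k s : ℕ) : Finset (Fin k → ℕ) :=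
  (Fintype.piFinset fun _ => range (s + 1)).filter Monotone

theorem mem_offsets {s : ℕ} {d : Fin k → ℕ} :
    d ∈ offsets k s ↔ Monotone d ∧ ∀ i, d i ≤ s := by
  simp [offsets, and_comm]

def blockStart (t : ℕ) (d : Fin k → ℕ) (i : Fin k) : ℕ := 1 + i * t + d i

def block (t : ℕ) (d : Fin k → ℕ) (i : Fin k) : Finset ℕ :=
  Ico (blockStart t d i) (blockStart t d i + t)

def blocks (t : ℕ) (d : Fin k → ℕ) : Finset (Finset ℕ) := univ.image (block t d)

def cover (t : ℕ) (d : Fin k → ℕ) : Finset ℕ := univ.biUnion (block t d)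

theorem mem_cover {d : Fin k → ℕ} {w : ℕ} :
    w ∈ cover t d ↔ ∃ i, blockStart t d i ≤ w ∧ w < blockStart t d i + t := by
  simp [cover, block]

theorem blockStart_add_le {d : Fin k → ℕ} (hd : Monotone d) {i j : Fin k} (hij : i < j) :
    blockStart t d i + t ≤ blockStart t d j := by
  have h1 : (i + 1) * t ≤ j * t := Nat.mul_le_mul_right _ hij
  have h2 := hd hij.le
  rw [add_mul] at h1
  unfold blockStart
  omega

theorem block_inter_block {d : Fin k → ℕ} (hd : Monotone d) {i j : Fin k} (hij : i ≠ j) :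
    block t d i ∩ block t d j = ∅ := by
  refine Ico_inter_Ico_add_eq_empty_iff.2 (Or.inr ?_)
  rcases hij.lt_or_gt with h | h
  · exact Or.inl (blockStart_add_le hd h)
  · exact Or.inr (blockStart_add_le hd h)

theorem block_injective (ht : 0 < t) {d : Fin k → ℕ} (hd : Monotone d) :
    Function.Injective (block t d) := by
  intro i j h
  by_contra hij
  have := block_inter_block (t := t) hd hij
  rw [← h, inter_self, block, Ico_eq_empty_iff] at this
  omega

theorem card_blocks (ht : 0 < t) {d : Fin k → ℕ} (hd : Monotone d) : (blocks t d).card = k := by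
  rw [blocks, card_image_of_injective _ (block_injective ht hd), card_univ, Fintype.card_fin]

theorem card_cover {d : Fin k → ℕ} (hd : Monotone d) : (cover t d).card = k * t := by
  rw [cover, card_biUnion fun i _ j _ hij =>
    disjoint_iff_inter_eq_empty.2 (block_inter_block hd hij)]
  simp [block]

theorem biUnion_blocks (d : Fin k → ℕ) : (blocks t d).biUnion id = cover t d := by
  rw [blocks, image_biUnion]
  rfl

theorem blockStart_mem_Icc {n : ℕ} {d : Fin k → ℕ} (hd : d ∈ offsets k (n - k * t))
    (hkt : k * t ≤ n) (i : Fin k) : blockStart t d i ∈ Icc 1 (n - t + 1) := by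
  have h1 : (i + 1) * t ≤ k * t := Nat.mul_le_mul_right _ i.isLt
  have h2 := (mem_offsets.1 hd).2 i
  rw [add_mul] at h1
  rw [mem_Icc, blockStart]
  omega

theorem isMatching_blocks {n : ℕ} (ht : 0 < t) (hkt : k * t ≤ n) {d : Fin k → ℕ}
    (hd : d ∈ offsets k (n - k * t)) : (pathComplex n t).IsMatching (blocks t d) := by
  refine ⟨fun F hF => ?_, fun F hF G hG hFG => ?_⟩
  · obtain ⟨i, -, rfl⟩ := mem_image.1 hF
    exact (Ico_mem_facets_pathComplex ht).2 (blockStart_mem_Icc hd hkt i)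
  · obtain ⟨i, -, rfl⟩ := mem_image.1 hF
    obtain ⟨j, -, rfl⟩ := mem_image.1 hG
    exact block_inter_block (mem_offsets.1 hd).1 fun h => hFG (h ▸ rfl)

theorem exists_offsets_blockStart_eq {n m : ℕ} {a : Fin (m + 1) → ℕ} (h0 : 1 ≤ a 0)
    (hlast : a (Fin.last m) ≤ n - t + 1) (hstep : ∀ i : Fin m, a i.castSucc + t ≤ a i.succ) :
    ∃ d ∈ offsets (m + 1) (n - (m + 1) * t), blockStart t d = a := by
  have hstart : ∀ i : Fin (m + 1), 1 + i * t ≤ a i :=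
    Fin.induction (by simpa using h0) fun i ih => by
      have := hstep i
      simp only [Fin.val_castSucc, Fin.val_succ, add_mul, one_mul] at ih ⊢
      omega
  have hd : Monotone fun i : Fin (m + 1) => a i - (1 + i * t) :=
    Fin.monotone_iff_le_succ.2 fun i => by
      have := hstep i
      simp only [Fin.val_castSucc, Fin.val_succ, add_mul, one_mul]
      omega
  refine ⟨_, mem_offsets.2 ⟨hd, fun i => ?_⟩, funext fun i => ?_⟩
  · have h1 : a i - (1 + i * t) ≤ a (Fin.last m) - (1 + m * t) := hd (Fin.le_last i)
    have h2 : 1 + m * t ≤ a (Fin.last m) := hstart (Fin.last m)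
    rw [add_mul, one_mul]
    omega
  · have := hstart i
    simp only [blockStart]
    omega

theorem exists_offsets_eq_blocks {n : ℕ} (ht : 0 < t) {M : Finset (Finset ℕ)}
    (hM : (pathComplex n t).IsMatching M) (hk : M.card = k) :
    ∃ d ∈ offsets k (n - k * t), blocks t d = M := by
  classical
  obtain ⟨hMf, hdisj⟩ := hM
  rw [facets_pathComplex ht] at hMf
  set S := (Icc 1 (n - t + 1)).filter fun a => Ico a (a + t) ∈ M
  have hSM : S.image (fun a => Ico a (a + t)) = M := by
    rw [← inter_eq_right.2 hMf, ← filter_mem_eq_inter, filter_image]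
  have hS : S.card = k := by
    rw [← hk, ← hSM, card_image_of_injective _ (Ico_add_injective ht)]
  obtain _ | m := k
  · refine ⟨0, mem_offsets.2 ⟨monotone_const, fun i => i.elim0⟩, ?_⟩
    rw [card_eq_zero.1 hk]
    rfl
  set a := S.orderEmbOfFin hS
  have haS : ∀ i, a i ∈ Icc 1 (n - t + 1) ∧ Ico (a i) (a i + t) ∈ M :=
    fun i => mem_filter.1 (S.orderEmbOfFin_mem hS i)
  have hstep : ∀ i : Fin m, a i.castSucc + t ≤ a i.succ := fun i => by
    have hlt : a i.castSucc < a i.succ := a.strictMono Fin.castSucc_lt_succ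
    have := hdisj _ (haS i.castSucc).2 _ (haS i.succ).2 ((Ico_add_injective ht).ne hlt.ne)
    rw [Ico_inter_Ico_add_eq_empty_iff] at this
    omega
  obtain ⟨d, hd, hda⟩ := exists_offsets_blockStart_eq (mem_Icc.1 (haS 0).1).1
    (mem_Icc.1 (haS (Fin.last m)).1).2 hstep
  refine ⟨d, hd, ?_⟩
  rw [← hSM, ← S.image_orderEmbOfFin_univ hS, image_image, blocks]
  exact image_congr fun i _ => by simp [block, hda, a]

end Blocks

section RestrictedMatchingNumber

variable {n t k : ℕ}

theorem mul_lt_of_formGap_block (ht : 2 ≤ t) {d : Fin k → ℕ}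
    (hd : d ∈ offsets k (n - k * t)) (hk : 2 ≤ k) {p : Fin k}
    (hgap : ∀ j, j ≠ p → (pathComplex n t).FormGap (block t d p) (block t d j)) :
    k * t < n := by
  obtain ⟨hmono, hle⟩ := mem_offsets.1 hd
  suffices ∃ i j : Fin k, (j : ℕ) = i + 1 ∧ blockStart t d i + t < blockStart t d j by
    obtain ⟨i, j, hij, hlt⟩ := this
    have := hle j
    rw [blockStart, blockStart, hij, add_mul] at hlt
    omega
  have hle_of_lt : ∀ {i j : Fin k}, i < j → blockStart t d i ≤ blockStart t d j :=
    fun hij => (Nat.le_add_right _ _).trans (blockStart_add_le hmono hij)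
  by_cases hp : (p : ℕ) + 1 < k
  · have hpj : p < ⟨p + 1, hp⟩ := Fin.lt_def.2 (Nat.lt_succ_self _)
    exact ⟨p, _, rfl, lt_of_formGap_pathComplex ht (hgap _ hpj.ne') (hle_of_lt hpj)⟩
  · have hip : (⟨p - 1, by omega⟩ : Fin k) < p := Fin.lt_def.2 (by simp; omega)
    exact ⟨_, p, by simp; omega,
      lt_of_formGap_pathComplex ht (hgap _ hip.ne).symm (hle_of_lt hip)⟩

theorem card_mul_lt_of_isRestrictedMatching (ht : 2 ≤ t) {M : Finset (Finset ℕ)}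
    (hM : (pathComplex n t).IsRestrictedMatching M) (h2 : 2 ≤ M.card) : M.card * t < n := by
  obtain ⟨hMm, F, hF, hgap⟩ := hM
  obtain ⟨d, hd, hdM⟩ := exists_offsets_eq_blocks (by omega) hMm rfl
  rw [← hdM] at hF hgap
  obtain ⟨p, -, rfl⟩ := mem_image.1 hF
  exact mul_lt_of_formGap_block ht hd h2 fun j hj => hgap _ (mem_image_of_mem _ (mem_univ j))
    ((block_injective (by omega) (mem_offsets.1 hd).1).ne hj)

theorem exists_isRestrictedMatching_card (ht : 0 < t) (hk : 0 < k) (hkt : k * t < n) :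
    ∃ M, (pathComplex n t).IsRestrictedMatching M ∧ M.card = k := by
  set d : Fin k → ℕ := fun i => if (i : ℕ) = 0 then 0 else 1
  have hd : d ∈ offsets k (n - k * t) := by
    refine mem_offsets.2 ⟨fun i j hij => ?_, fun i => ?_⟩ <;> simp only [d]
    · have := Fin.le_def.1 hij
      split_ifs <;> omega
    · split_ifs <;> omega
  refine ⟨blocks t d, ⟨isMatching_blocks ht hkt.le hd, block t d ⟨0, hk⟩,
    mem_image_of_mem _ (mem_univ _), ?_⟩, card_blocks ht (mem_offsets.1 hd).1⟩
  rintro _ hG hG0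
  obtain ⟨j, -, rfl⟩ := mem_image.1 hG
  have hj : (j : ℕ) ≠ 0 := fun h => hG0 (congrArg _ (Fin.ext h))
  refine formGap_pathComplex_of_lt ht (blockStart_mem_Icc hd hkt.le _)
    (blockStart_mem_Icc hd hkt.le _) ?_
  have : 1 * t ≤ j * t := Nat.mul_le_mul_right _ (Nat.one_le_iff_ne_zero.2 hj)
  simp only [blockStart, d, hj, if_true, if_false]
  omega

theorem restrictedMatchingNumber_pathComplex (ht : 2 ≤ t) (htn : t ≤ n) :
    (pathComplex n t).restrictedMatchingNumber = max 1 ((n - 1) / t) := by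
  refine IsGreatest.csSup_eq ⟨?_, ?_⟩
  · rcases Nat.eq_zero_or_pos ((n - 1) / t) with h | h
    · refine ⟨{Ico 1 (1 + t)}, SimplicialComplex.isRestrictedMatching_singleton
        ((Ico_mem_facets_pathComplex (by omega)).2 (by simp)), by simp [h]⟩
    · have := Nat.div_mul_le_self (n - 1) t
      obtain ⟨M, hM, hcard⟩ := exists_isRestrictedMatching_card (n := n) (t := t) (by omega) h
        (by omega)
      exact ⟨M, hM, by omega⟩
  · rintro _ ⟨M, hM, rfl⟩
    by_cases h2 : M.card ≤ 1
    · exact h2.trans (le_max_left _ _)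
    · have := card_mul_lt_of_isRestrictedMatching ht hM (by omega)
      exact (Nat.le_div_iff_mul_le (by omega)).2 (by omega) |>.trans (le_max_right _ _)

theorem restrictedMatchingNumber_pathComplex_mul_bounds (ht : 2 ≤ t) (htn : t ≤ n) :
    (pathComplex n t).restrictedMatchingNumber * t ≤ n ∧
      n ≤ (pathComplex n t).restrictedMatchingNumber * t + t := by
  rw [restrictedMatchingNumber_pathComplex ht htn]
  have h1 := Nat.div_mul_le_self (n - 1) t
  have h2 := Nat.lt_div_mul_add (a := n - 1) (by omega : 0 < t)
  rcases le_total 1 ((n - 1) / t) with h | h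
  · rw [max_eq_right h]
    omega
  · have := Nat.mul_le_mul_right t h
    rw [max_eq_left h]
    omega

end RestrictedMatchingNumber

theorem sqfreePower_pathComplex (K : Type) [Field K] {n t k : ℕ} (ht : 0 < t)
    (hkt : k * t ≤ n) :
    sqfreePower K (pathComplex n t) k =
      Ideal.span ((fun d => monomial (sqfreeExp (cover t d)) (1 : K)) ''
        (offsets k (n - k * t) : Set (Fin k → ℕ))) := by
  rw [sqfreePower, matchPow]
  congr 1
  ext p
  simp only [Set.mem_ofPred_eq, Set.mem_image, mem_coe]
  constructor
  · rintro ⟨M, hMf, hdisj, hk, rfl⟩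
    obtain ⟨d, hd, rfl⟩ := exists_offsets_eq_blocks ht ⟨hMf, hdisj⟩ hk
    exact ⟨d, hd, by rw [prod_prod_X_eq_monomial_sqfreeExp K hdisj, biUnion_blocks]⟩
  · rintro ⟨d, hd, rfl⟩
    have hM := isMatching_blocks ht hkt hd
    refine ⟨blocks t d, hM.1, hM.2, card_blocks ht (mem_offsets.1 hd).1, ?_⟩
    rw [prod_prod_X_eq_monomial_sqfreeExp K hM.2, biUnion_blocks]

section Exchange

variable {k s t : ℕ} {A B : Fin k → ℕ}

theorem exists_max_lt_of_exists_lt (hA : Monotone A) (h : ∃ i, B i < A i) :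
    ∃ l, B l < A l ∧ ∀ i, l < i → B l < B i := by
  classical
  have hne : (univ.filter fun i => B i < A i).Nonempty := by simpa [Finset.Nonempty] using h
  set l := (univ.filter fun i => B i < A i).max' hne
  have hl : B l < A l := (mem_filter.1 (max'_mem _ hne)).2
  refine ⟨l, hl, fun i hli => ?_⟩
  have : ¬ B i < A i := fun hi => (le_max' _ i (mem_filter.2 ⟨mem_univ i, hi⟩)).not_gt hli
  have := hA hli.le
  omega

theorem update_mem_offsets (hB : B ∈ offsets k s) {l : Fin k} (hls : B l < s)
    (hgt : ∀ i, l < i → B l < B i) : Function.update B l (B l + 1) ∈ offsets k s := by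
  obtain ⟨hmono, hle⟩ := mem_offsets.1 hB
  refine mem_offsets.2 ⟨fun i j hij => ?_, fun i => ?_⟩
  · simp only [Function.update_apply]
    split_ifs with hi hj hj
    · rfl
    · exact hgt j (lt_of_le_of_ne (hi ▸ hij) (Ne.symm (hi ▸ hj)))
    · exact (hmono (hj ▸ hij)).trans (Nat.le_succ _)
    · exact hmono hij
  · rcases eq_or_ne i l with rfl | hi
    · simp; omega
    · simpa [hi] using hle i

theorem cover_update_subset (B : Fin k → ℕ) (l : Fin k) :
    cover t (Function.update B l (B l + 1)) ⊆ insert (blockStart t B l + t) (cover t B) := by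
  intro w hw
  obtain ⟨i, h1, h2⟩ := mem_cover.1 hw
  rw [mem_insert, mem_cover]
  rcases eq_or_ne i l with rfl | hi
  · simp only [blockStart, Function.update_self] at h1 h2
    by_cases hw : w = blockStart t B i + t
    · exact Or.inl hw
    · exact Or.inr ⟨i, by unfold blockStart at hw ⊢; omega⟩
  · simp only [blockStart, Function.update_of_ne hi] at h1 h2
    exact Or.inr ⟨i, h1, h2⟩

theorem blockStart_add_mem_cover (hst : s ≤ t) (hA : A ∈ offsets k s) {l : Fin k}
    (hl : B l < A l) : blockStart t B l + t ∈ cover t A := by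
  have := (mem_offsets.1 hA).2 l
  exact mem_cover.2 ⟨l, by unfold blockStart; omega, by unfold blockStart; omega⟩

theorem blockStart_add_notMem_cover (hB : Monotone B) {l : Fin k}
    (hgt : ∀ i, l < i → B l < B i) : blockStart t B l + t ∉ cover t B := by
  rw [mem_cover]
  rintro ⟨i, h1, h2⟩
  rcases lt_trichotomy i l with h | rfl | h
  · have := blockStart_add_le (t := t) hB h
    omega
  · omega
  · have h3 : (l + 1) * t ≤ i * t := Nat.mul_le_mul_right _ h
    have := hgt i h
    rw [add_mul] at h3
    unfold blockStart at h1
    omega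

theorem exists_exchange (hst : s ≤ t) (hA : A ∈ offsets k s) (hB : B ∈ offsets k s)
    (h : ∃ i, B i < A i) :
    ∃ v ∈ cover t A, v ∉ cover t B ∧
      ∃ C ∈ offsets k s, toLex B < toLex C ∧ cover t C ⊆ insert v (cover t B) := by
  obtain ⟨l, hl, hgt⟩ := exists_max_lt_of_exists_lt (mem_offsets.1 hA).1 h
  exact ⟨_, blockStart_add_mem_cover hst hA hl,
    blockStart_add_notMem_cover (mem_offsets.1 hB).1 hgt,
    _, update_mem_offsets hB (hl.trans_le ((mem_offsets.1 hA).2 l)) hgt,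
    Pi.lt_toLex_update_self_iff.2 (Nat.lt_succ_self _), cover_update_subset B l⟩

theorem eq_of_cover_subset_cover (hst : s ≤ t) (hA : A ∈ offsets k s)
    (hB : B ∈ offsets k s) (hAB : cover t A ⊆ cover t B) : A = B := by
  have hcover : cover t A = cover t B := eq_of_subset_of_card_le hAB
    (by rw [card_cover (mem_offsets.1 hA).1, card_cover (mem_offsets.1 hB).1])
  by_contra hne
  obtain ⟨i, hi⟩ := Function.ne_iff.1 hne
  rcases hi.lt_or_gt with h | h
  · obtain ⟨v, hv, hv', -⟩ := exists_exchange (t := t) hst hB hA ⟨i, h⟩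
    exact hv' (hcover ▸ hv)
  · obtain ⟨v, hv, hv', -⟩ := exists_exchange (t := t) hst hA hB ⟨i, h⟩
    exact hv' (hcover ▸ hv)

end Exchange

theorem hasLinearQuotients_span_cover (K : Type) [Field K] {k s t : ℕ} (hst : s ≤ t) :
    HasLinearQuotients (Ideal.span ((fun d => monomial (sqfreeExp (cover t d)) (1 : K)) ''
      (offsets k s : Set (Fin k → ℕ)))) := by
  let e : (Fin k → ℕ) ≃ (Lex (Fin k → ℕ))ᵒᵈ := toLex.trans OrderDual.toDual
  have := hasLinearQuotients_span_monomial_of_exchange (K := K)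
    ((offsets k s).map e.toEmbedding) (fun x => sqfreeExp (cover t (e.symm x))) ?_ ?_
  · simpa only [coe_map, Set.image_image, Equiv.coe_toEmbedding, Equiv.symm_apply_apply]
      using this
  · simp only [forall_mem_map, Equiv.coe_toEmbedding, Equiv.symm_apply_apply,
      sqfreeExp_le_sqfreeExp]
    intro A hA B hB hAB
    rw [eq_of_cover_subset_cover hst hA hB hAB]
  · simp only [forall_mem_map, Equiv.coe_toEmbedding, Equiv.symm_apply_apply]
    intro A hA B hB hBA
    obtain ⟨i, -, hi⟩ := hBA
    obtain ⟨v, hvB, hvA, C, hC, hAC, hCA⟩ := exists_exchange hst hB hA ⟨i, hi⟩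
    refine ⟨v, ?_, e C, mem_map_of_mem _ hC, hAC, ?_⟩
    · simp [sqfreeExp_apply, hvA, hvB]
    · simpa using sqfreeExp_le_add_single hCA

/-- For the `t`-path simplicial tree `Γ_{n,t}` of the path
graph `P_n`, the squarefree power `I_{n,t}^{[ν₀(Γ_{n,t})]}` has linear
quotients. -/
theorem path_restricted_sqfreePower_hasLinearQuotients
    (K : Type) [Field K] (n t : ℕ) (ht : 2 ≤ t) (htn : t ≤ n) :
    HasLinearQuotients
      (sqfreePower K (pathComplex n t) (pathComplex n t).restrictedMatchingNumber) := by
  obtain ⟨hle, hge⟩ := restrictedMatchingNumber_pathComplex_mul_bounds ht htn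
  rw [sqfreePower_pathComplex K (by omega) hle]
  exact hasLinearQuotients_span_cover K (by omega)

end
end
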